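/- arXiv:2312.00379 — 4 statements merged into one kernel-verified Lean document; each statement's English description precedes it below -/
import Mathlib

section
/- Let $V = \{v_1, \dots, v_{3t}\}$ and consider the $t$ queries $Q = \{(v_{3i+1}, v_{3i+2}, v_{3i+3}) : 0 \leq i < t\}$. For every binary labeling of $Q$ there exists a partition of $V$ into two classes $C_1, C_2$ such that, defining $\rho_C(x, y) = 0$ if $x, y$ are in the same class and $1$ otherwise, each query $(a, b, c)$ labeled 'b positive' satisfies $\rho_C(a, b) < \rho_C(a, c)$ and each query labeled 'c positive' satisfies $\rho_C(a, c) < \rho_C(a, b)$. Hence the VC dimension of contrastive learning with class-indicator distances on $n = 3t$ points is at least $n/3$. -/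
/-!
Colour every anchor `v_{3i}` with `true`, the point labelled positive with `true` as well and the
other point with `false`: then the positive point is at class distance `0` from the anchor and the
negative one at distance `1`. The queries use disjoint triples of points, so the labels can be
satisfied independently.
-/

lemma ite_zero_one_lt_of_eq_of_ne {α : Type*} [DecidableEq α] {a b c : α}
    (hb : a = b) (hc : a ≠ c) :
    (if a = b then (0 : ℝ) else 1) < (if a = c then 0 else 1) := by
  rw [if_pos hb, if_neg hc]
  exact one_pos

def tripletColoring (f : ℕ → Bool) (n : ℕ) : Bool :=
  if n % 3 = 0 then true else if n % 3 = 1 then f (n / 3) else !f (n / 3)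

section tripletColoring

variable (f : ℕ → Bool) (i : ℕ)

@[simp]
lemma tripletColoring_three_mul : tripletColoring f (3 * i) = true := by
  simp [tripletColoring]

@[simp]
lemma tripletColoring_three_mul_add_one : tripletColoring f (3 * i + 1) = f i := by
  have hmod : (3 * i + 1) % 3 = 1 := by omega
  have hdiv : (3 * i + 1) / 3 = i := by omega
  simp [tripletColoring, hmod, hdiv]

@[simp]
lemma tripletColoring_three_mul_add_two : tripletColoring f (3 * i + 2) = !f i := by
  have hmod : (3 * i + 2) % 3 = 2 := by omega
  have hdiv : (3 * i + 2) / 3 = i := by omega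
  simp [tripletColoring, hmod, hdiv]

end tripletColoring

theorem stmt_15 (t : ℕ) (f : ℕ → Bool) :
    ∃ c : ℕ → Bool, ∀ i < t,
      (f i = true →
        (if c (3 * i) = c (3 * i + 1) then (0 : ℝ) else 1) <
          (if c (3 * i) = c (3 * i + 2) then 0 else 1)) ∧
      (f i = false →
        (if c (3 * i) = c (3 * i + 2) then (0 : ℝ) else 1) <
          (if c (3 * i) = c (3 * i + 1) then 0 else 1)) := by
  refine ⟨tripletColoring f, fun i _ => ⟨fun hf => ?_, fun hf => ?_⟩⟩ <;>
    apply ite_zero_one_lt_of_eq_of_ne <;> simp [hf]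
end

section
/- Let $V$ be a finite set of size $n$ and consider any collection of $k \geq n$ labeled class-distance samples, where each labeled sample $(x_i, y_i^+, z_i^-)$ asserts that $x_i$ and $y_i$ are in the same class while $x_i$ and $z_i$ are in different classes. Build a graph $G$ on $V$ with an edge $\{x_i, y_i\}$ for each sample. If $G$ contains a cycle through an edge $\{x, y\}$, then flipping the label of the sample corresponding to $\{x, y\}$ (asserting instead that $x, z$ are in the same class and $x, y$ in different classes) yields an unsatisfiable labeling: no partition of $V$ into classes is consistent with all labeled samples. Hence the VC dimension of contrastive learning with class-indicator distances is at most $n$. -/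
/-! Every sample other than `i₀` forces its endpoints `x j`, `y j` into one class, and the path
`w` joins `x i₀` to `y i₀` through such edges only; since "same class" is transitive, `x i₀` and
`y i₀` share a class, contradicting the flipped label of sample `i₀`. -/

theorem Nat.apply_zero_eq_apply_of_succ_eq {α : Type*} {f : ℕ → α} {t : ℕ}
    (h : ∀ s < t, f s = f (s + 1)) : f 0 = f t := by
  induction t with
  | zero => rfl
  | succ t ih => exact (ih fun s hs => h s (by omega)).trans (h t t.lt_succ_self)

theorem stmt_16 {V : Type*} (k : ℕ) (x y z : Fin k → V) (i₀ : Fin k)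
    (t : ℕ) (w : ℕ → V) (hw0 : w 0 = x i₀) (hwt : w t = y i₀)
    (hpath : ∀ s < t, ∃ j : Fin k, j ≠ i₀ ∧
      ((w s = x j ∧ w (s + 1) = y j) ∨ (w s = y j ∧ w (s + 1) = x j))) :
    ¬ ∃ c : V → ℕ,
      (∀ j : Fin k, j ≠ i₀ → c (x j) = c (y j) ∧ c (x j) ≠ c (z j)) ∧
      (c (x i₀) = c (z i₀) ∧ c (x i₀) ≠ c (y i₀)) := by
  rintro ⟨c, hsat, -, hne⟩
  have hstep : ∀ s < t, c (w s) = c (w (s + 1)) := by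
    intro s hs
    obtain ⟨j, hj, ⟨hu, hv⟩ | ⟨hu, hv⟩⟩ := hpath s hs
    · rw [hu, hv, (hsat j hj).1]
    · rw [hu, hv, (hsat j hj).1]
  exact hne (hw0 ▸ hwt ▸ Nat.apply_zero_eq_apply_of_succ_eq (f := c ∘ w) hstep)
end

section
/- Let $\Delta$ be a class of distance functions such that for any finite set $S$, any $\rho \in \Delta$ on $S$, and any new point $o$, there exists $\rho' \in \Delta$ on $S \cup \{o\}$ extending $\rho$ with $\rho'(x, y) < \rho'(x, o)$ for all $x, y \in S$. Let $Q = \{(x_i, y_i, z_i)\}_{i=1}^m$ be a set of triplet queries on a point set $S$ of size $n - k + 1$ that is VC-shattered by $\Delta$. Then, adding $k - 1$ new 'outlier' points $o_1, \dots, o_{k-1}$, the set of $(k+2)$-tuples $Q' = \{(x_i, y_i, z_i, o_1, \dots, o_{k-1})\}_{i=1}^m$ is Natarajan-shattered (with the per-query label pair being 'positive is $y_i$' vs 'positive is $z_i$') by contrastive learning with $k$ negatives over $\Delta$. -/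
/-!
Take a metric `ρ ∈ Δ S` realising the labelling on the triplets and add the outliers one at a
time. Each step keeps `ρ` on the old points and puts the new point farther from every old point
than any old point is, so at the end the triplet comparisons are unchanged while every `o j` is
farther from each anchor `x i` than both `y i` and `z i`.
-/

section OutlierExtension

variable {V : Type*} [DecidableEq V]

def HasOutlierExtension (Δ : Finset V → Set (V → V → ℝ)) : Prop :=
  ∀ (S : Finset V) (ρ : V → V → ℝ), ρ ∈ Δ S → ∀ o ∉ S,
    ∃ ρ' ∈ Δ (insert o S), (∀ x ∈ S, ∀ y ∈ S, ρ' x y = ρ x y) ∧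
      (∀ x ∈ S, ∀ y ∈ S, ρ' x y < ρ' x o)

theorem HasOutlierExtension.exists_extension_union {Δ : Finset V → Set (V → V → ℝ)}
    (hΔ : HasOutlierExtension Δ) {S T : Finset V} (hST : Disjoint S T)
    {ρ : V → V → ℝ} (hρ : ρ ∈ Δ S) :
    ∃ ρ' ∈ Δ (S ∪ T), (∀ x ∈ S, ∀ y ∈ S, ρ' x y = ρ x y) ∧
      ∀ x ∈ S, ∀ y ∈ S, ∀ t ∈ T, ρ' x y < ρ' x t := by
  induction T using Finset.induction_on with
  | empty => exact ⟨ρ, by simpa using hρ, fun _ _ _ _ => rfl, by simp⟩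
  | @insert a T haT ih =>
    rw [Finset.disjoint_insert_right] at hST
    obtain ⟨ρ₁, hρ₁, heq₁, hlt₁⟩ := ih hST.2
    have haST : a ∉ S ∪ T := by simp [hST.1, haT]
    obtain ⟨ρ₂, hρ₂, heq₂, hlt₂⟩ := hΔ (S ∪ T) ρ₁ hρ₁ a haST
    have heq : ∀ x ∈ S, ∀ y ∈ S ∪ T, ρ₂ x y = ρ₁ x y := fun x hx y hy =>
      heq₂ x (Finset.mem_union_left _ hx) y hy
    refine ⟨ρ₂, by rwa [Finset.union_insert], fun x hx y hy => ?_, fun x hx y hy t ht => ?_⟩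
    · rw [heq x hx y (Finset.mem_union_left _ hy), heq₁ x hx y hy]
    · rcases Finset.mem_insert.mp ht with rfl | ht
      · exact hlt₂ x (Finset.mem_union_left _ hx) y (Finset.mem_union_left _ hy)
      · rw [heq x hx y (Finset.mem_union_left _ hy), heq x hx t (Finset.mem_union_right _ ht)]
        exact hlt₁ x hx y hy t ht

end OutlierExtension

theorem stmt_17_general {V : Type*} [DecidableEq V]
    (Δ : Finset V → Set (V → V → ℝ))
    (hext : ∀ (S : Finset V) (ρ : V → V → ℝ), ρ ∈ Δ S → ∀ o ∉ S,
      ∃ ρ' ∈ Δ (insert o S), (∀ x ∈ S, ∀ y ∈ S, ρ' x y = ρ x y) ∧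
        (∀ x ∈ S, ∀ y ∈ S, ρ' x y < ρ' x o))
    (m k : ℕ)
    (S : Finset V) (x y z : Fin m → V)
    (hx : ∀ i, x i ∈ S) (hy : ∀ i, y i ∈ S) (hz : ∀ i, z i ∈ S)
    (hshatter : ∀ f : Fin m → Bool, ∃ ρ ∈ Δ S, ∀ i,
      (f i = true → ρ (x i) (y i) < ρ (x i) (z i)) ∧
      (f i = false → ρ (x i) (z i) < ρ (x i) (y i)))
    (o : Fin (k - 1) → V) (hoS : ∀ j, o j ∉ S) :
    ∀ f : Fin m → Bool, ∃ ρ ∈ Δ (S ∪ Finset.image o Finset.univ), ∀ i,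
      (f i = true → ρ (x i) (y i) < ρ (x i) (z i) ∧
        ∀ j, ρ (x i) (y i) < ρ (x i) (o j)) ∧
      (f i = false → ρ (x i) (z i) < ρ (x i) (y i) ∧
        ∀ j, ρ (x i) (z i) < ρ (x i) (o j)) := by
  intro f
  obtain ⟨ρ, hρ, hf⟩ := hshatter f
  have hdisj : Disjoint S (Finset.image o Finset.univ) := by
    simpa [Finset.disjoint_right] using hoS
  obtain ⟨ρ', hρ', heq, hlt⟩ :=
    HasOutlierExtension.exists_extension_union (Δ := Δ) hext hdisj hρ
  have hfar : ∀ i, ∀ w ∈ S, ∀ j, ρ' (x i) w < ρ' (x i) (o j) := fun i w hw j =>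
    hlt _ (hx i) w hw _ (Finset.mem_image_of_mem o (Finset.mem_univ j))
  refine ⟨ρ', hρ', fun i => ⟨fun hi => ⟨?_, hfar i _ (hy i)⟩, fun hi => ⟨?_, hfar i _ (hz i)⟩⟩⟩
  · rw [heq _ (hx i) _ (hy i), heq _ (hx i) _ (hz i)]
    exact (hf i).1 hi
  · rw [heq _ (hx i) _ (hz i), heq _ (hx i) _ (hy i)]
    exact (hf i).2 hi

theorem stmt_17 {V : Type*} [DecidableEq V]
    (Δ : Finset V → Set (V → V → ℝ))
    (hext : ∀ (S : Finset V) (ρ : V → V → ℝ), ρ ∈ Δ S → ∀ o ∉ S,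
      ∃ ρ' ∈ Δ (insert o S), (∀ x ∈ S, ∀ y ∈ S, ρ' x y = ρ x y) ∧
        (∀ x ∈ S, ∀ y ∈ S, ρ' x y < ρ' x o))
    (m k : ℕ) (hk : 1 ≤ k)
    (S : Finset V) (x y z : Fin m → V)
    (hx : ∀ i, x i ∈ S) (hy : ∀ i, y i ∈ S) (hz : ∀ i, z i ∈ S)
    (hshatter : ∀ f : Fin m → Bool, ∃ ρ ∈ Δ S, ∀ i,
      (f i = true → ρ (x i) (y i) < ρ (x i) (z i)) ∧
      (f i = false → ρ (x i) (z i) < ρ (x i) (y i)))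
    (o : Fin (k - 1) → V) (ho : Function.Injective o) (hoS : ∀ j, o j ∉ S) :
    ∀ f : Fin m → Bool, ∃ ρ ∈ Δ (S ∪ Finset.image o Finset.univ), ∀ i,
      (f i = true → ρ (x i) (y i) < ρ (x i) (z i) ∧
        ∀ j, ρ (x i) (y i) < ρ (x i) (o j)) ∧
      (f i = false → ρ (x i) (z i) < ρ (x i) (y i) ∧
        ∀ j, ρ (x i) (z i) < ρ (x i) (o j)) :=
  stmt_17_general Δ hext m k S x y z hx hy hz hshatter o hoS
end

section
/- For all integers $n \geq 2$ and $m, k$ with $k \leq 2n - 1$, if $m \geq 3 n \log_2 n$ and $n$ is sufficiently large, then $2 (2n)^{2n-2} \cdot (4 e m / k)^{k} < 2^m$. -/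
/-!
After taking logarithms, `k ↦ k log (a / k)` is increasing as long as `e k ≤ a`, so the Warren
factor `(4em/k)^k` is largest at `k = 2n`; together with the tree count this bounds the left-hand
side by `(4em)^(2n)`. Writing `m = t n`, the hypothesis says `n ≤ 2^(t/3)`, and
`(4em)^(2n) < 2^m` reduces to `2 log (4et) + 2 log n < t log 2`, which holds once `t` is large
because `log (4et) = o(t)`.
-/

open Real Filter

lemma mul_log_div_le_mul_log_div {a k K : ℝ} (hk : 0 < k) (hkK : k ≤ K) (ha : exp 1 * K ≤ a) :
    k * log (a / k) ≤ K * log (a / K) := by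
  have hK : 0 < K := hk.trans_le hkK
  have ha0 : 0 < a := lt_of_lt_of_le (by positivity) ha
  have hlogK : log K + 1 ≤ log a := by
    simpa [log_mul (exp_pos 1).ne' hK.ne', add_comm] using log_le_log (by positivity) ha
  have hlogKk : k * (log K - log k) ≤ K - k := by
    have := log_le_sub_one_of_pos (div_pos hK hk)
    rw [log_div hK.ne' hk.ne'] at this
    calc k * (log K - log k) ≤ k * (K / k - 1) := by gcongr
      _ = K - k := by field_simp
  -- `K log (a/K) - k log (a/k) = (K - k)(log a - log K) - k (log K - log k) ≥ (K - k) - (K - k)`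
  rw [log_div ha0.ne' hk.ne', log_div ha0.ne' hK.ne']
  nlinarith

lemma div_pow_le_div_pow {a : ℝ} {k K : ℕ} (hk : 1 ≤ k) (hkK : k ≤ K) (ha : exp 1 * K ≤ a) :
    (a / k) ^ k ≤ (a / K) ^ K := by
  have hk0 : (0 : ℝ) < k := by exact_mod_cast hk
  have hK0 : (0 : ℝ) < K := by exact_mod_cast hk.trans hkK
  have ha0 : 0 < a := lt_of_lt_of_le (by positivity) ha
  rw [← log_le_log_iff (by positivity) (by positivity), log_pow, log_pow]
  exact mul_log_div_le_mul_log_div hk0 (by exact_mod_cast hkK) ha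

lemma two_mul_pow_mul_div_pow_le {n k : ℕ} {x : ℝ} (hk : 1 ≤ k) (hkn : k ≤ 2 * n)
    (hnx : n ≤ 2 * x) :
    2 * (2 * n : ℝ) ^ (2 * n - 2) * (4 * exp 1 * x / k) ^ k ≤ (4 * exp 1 * x) ^ (2 * n) := by
  have hn : (1 : ℝ) ≤ n := by exact_mod_cast (show 1 ≤ n by omega)
  have hx : 0 ≤ x := by linarith
  have htree : 2 * (2 * n : ℝ) ^ (2 * n - 2) ≤ (2 * n : ℝ) ^ (2 * n) := by
    rw [← pow_sub_mul_pow (2 * n : ℝ) (show 2 ≤ 2 * n by omega), mul_comm]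
    gcongr
    nlinarith
  have hwarren : (4 * exp 1 * x / k) ^ k ≤ (4 * exp 1 * x / (2 * n : ℝ)) ^ (2 * n) := by
    have := div_pow_le_div_pow (a := 4 * exp 1 * x) hk hkn
    push_cast at this
    exact this (by nlinarith [exp_pos 1])
  calc 2 * (2 * n : ℝ) ^ (2 * n - 2) * (4 * exp 1 * x / k) ^ k
      ≤ (2 * n : ℝ) ^ (2 * n) * (4 * exp 1 * x / (2 * n : ℝ)) ^ (2 * n) := by
        gcongr
    _ = (4 * exp 1 * x) ^ (2 * n) := by
        rw [← mul_pow, mul_div_cancel₀ _ (by positivity)]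

lemma eventually_log_mul_lt_mul {a c : ℝ} (ha : 0 < a) (hc : 0 < c) :
    ∀ᶠ t in atTop, log (a * t) < c * t := by
  have hconst : ∀ᶠ t in atTop, log a < c / 2 * t :=
    (tendsto_id.const_mul_atTop (half_pos hc)).eventually_gt_atTop (log a)
  filter_upwards [isLittleO_log_id_atTop.bound (half_pos hc), hconst, eventually_gt_atTop 0]
    with t hlog hloga ht
  rw [norm_eq_abs, norm_eq_abs, id, abs_of_pos ht] at hlog
  rw [log_mul ha.ne' ht.ne']
  linarith [le_abs_self (log t)]

lemma four_exp_mul_pow_lt_two_rpow {n : ℕ} {x : ℝ} (hn : 0 < n)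
    (hx : 3 * n * logb 2 n ≤ x) (ht : log (4 * exp 1 * (x / n)) < log 2 / 6 * (x / n)) :
    (4 * exp 1 * x) ^ (2 * n) < 2 ^ x := by
  have hn0 : (0 : ℝ) < n := by exact_mod_cast hn
  set t := x / n
  have hxt : x = n * t := (mul_div_cancel₀ x hn0.ne').symm
  have hlog2 : 0 < log 2 := log_pos one_lt_two
  have hlogn : log n ≤ log 2 / 3 * t := by
    have : logb 2 n ≤ t / 3 := by
      rw [le_div_iff₀ (by norm_num), le_div_iff₀ hn0]; linarith
    rw [logb, div_le_iff₀ hlog2] at this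
    linarith
  have ht0 : 0 < t := by
    have : 0 ≤ t := by nlinarith [log_nonneg (show (1 : ℝ) ≤ n by exact_mod_cast hn)]
    refine this.lt_of_ne fun h => ?_
    simp [← h] at ht
  rw [hxt, ← log_lt_log_iff (by positivity) (by positivity), log_pow, log_rpow two_pos,
    mul_left_comm, log_mul hn0.ne' (by positivity)]
  push_cast
  nlinarith

lemma eventually_four_exp_mul_pow_lt_two_rpow :
    ∀ᶠ n : ℕ in atTop, ∀ x : ℝ, 3 * n * logb 2 n ≤ x → (4 * exp 1 * x) ^ (2 * n) < 2 ^ x := by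
  obtain ⟨T, hT⟩ := eventually_atTop.1 <|
    eventually_log_mul_lt_mul (by positivity : (0 : ℝ) < 4 * exp 1) (by positivity : 0 < log 2 / 6)
  have hlogb : Tendsto (fun n : ℕ => 3 * logb 2 n) atTop atTop :=
    ((tendsto_logb_atTop one_lt_two).comp tendsto_natCast_atTop_atTop).const_mul_atTop three_pos
  filter_upwards [hlogb.eventually_ge_atTop T, eventually_gt_atTop 0] with n hnT hn x hx
  refine four_exp_mul_pow_lt_two_rpow hn hx (hT _ ?_)
  rw [le_div_iff₀ (by exact_mod_cast hn)]
  nlinarith [(Nat.cast_pos.2 hn : (0 : ℝ) < n)]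

theorem stmt_19 : ∃ N : ℕ, ∀ n : ℕ, N ≤ n → 2 ≤ n →
    ∀ m k : ℕ, 1 ≤ k → k ≤ 2 * n - 1 → 3 * n * Real.logb 2 n ≤ m →
      2 * (2 * n : ℝ) ^ (2 * n - 2) * (4 * Real.exp 1 * m / k) ^ k < 2 ^ m := by
  obtain ⟨N, hN⟩ := eventually_atTop.1 eventually_four_exp_mul_pow_lt_two_rpow
  refine ⟨N, fun n hNn hn m k hk hkn hm => ?_⟩
  have hlogb : 1 ≤ logb 2 n := by
    rw [le_logb_iff_rpow_le one_lt_two (by positivity), rpow_one]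
    exact_mod_cast hn
  calc 2 * (2 * n : ℝ) ^ (2 * n - 2) * (4 * exp 1 * m / k) ^ k
      ≤ (4 * exp 1 * m) ^ (2 * n) :=
        two_mul_pow_mul_div_pow_le hk (hkn.trans (Nat.sub_le _ _)) (by nlinarith)
    _ < 2 ^ (m : ℝ) := hN n hNn m hm
    _ = 2 ^ m := rpow_natCast 2 m
end
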